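/- arXiv:2405.14721 — 5 statements merged into one kernel-verified Lean document; each statement's English description precedes it below -/
import Mathlib

section
/- Let N_j denote, for j ∈ K, the (j,j)-minor of the matrix B(z_c), i.e. the determinant of B(z_c) with its j-th row and j-th column removed. Then N₀ ≠ 0, and for each j ∈ K one has U_j = N_j/N₀, and moreover α = (1/k) Σ_{j=0}^{k−1} (N_j/N₀)(1 − ρ_j(z_c)). -/
open MeasureTheory Matrix Filter

noncomputable section

/-- The maximum of the support (within `[0,1]`) of a measure `μ` on `ℝ`:
`sup {x ∈ [0,1] : μ([x,1]) > 0}`. -/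
def etaSup (μ : Measure ℝ) : ℝ :=
  sSup {x | x ∈ Set.Icc (0:ℝ) 1 ∧ 0 < μ (Set.Icc x 1)}

/-- Membership in `I_μ`: `z ≥ 0` and `∑_{n≥0} z^n ∫ x^n β_j q_j(dx) < ∞` for every `j`. -/
def memIm (k : ℕ) (β : Fin k → ℝ) (q : Fin k → Measure ℝ) (z : ℝ) : Prop :=
  0 ≤ z ∧ ∀ j : Fin k,
    (∑' n : ℕ, ENNReal.ofReal (z ^ n) * ∫⁻ x, ENNReal.ofReal (x ^ n * β j) ∂(q j)) < ⊤

/-- The matrix `A(z)` with entries `A(z)_{i,j} = μ_j^{[i−j]}(z)`, where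
`μ_j^i(z) = ∫ (zx)^i / (1 − (zx)^k) β_j q_j(dx)`. -/
def Amat (k : ℕ) (β : Fin k → ℝ) (q : Fin k → Measure ℝ) (z : ℝ) :
    Matrix (Fin k) (Fin k) ℝ :=
  Matrix.of fun i j =>
    ∫ x, (z * x) ^ (((i - j : Fin k) : ℕ)) / (1 - (z * x) ^ k) * β j ∂(q j)

/-- `ρ_j(z) = ∫ β_j q_j(dx) / (1 − z x)`. -/
def rhoFun (k : ℕ) (β : Fin k → ℝ) (q : Fin k → Measure ℝ) (z : ℝ) (j : Fin k) : ℝ :=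
  ∫ x, β j / (1 - z * x) ∂(q j)

/-!
Since `z_c ∈ I_μ`, the entries of `A(z_c)` are finite, nonnegative, and summing the geometric
series shows that the `j`-th column of `A(z_c)` sums to `ρ_j(z_c)`. Hence `B` is the
column-centred version of `A(z_c) − I`: its columns sum to `0`, so `𝟏ᵀ B = 0`. Summing the
coordinates of `B U = −(α + (1/k)∑ⱼ (ρ_j − 1) U_j) 𝟏` gives `B U = 0` and the formula for `α`.

A Perron–Frobenius argument (compare `v` with the largest multiple of `U` below it and the
smallest one above it, at the rows where they touch `v`) shows that every solution of
`A v = v + c 𝟏` is a multiple of `U`, provided `α > 0` or `A(z_c)` is entrywise positive; the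
latter holds when `α = 0`, because then `z_c > 0`. So `ker B = ℝ U`, and as `𝟏ᵀ B = 0` the left
kernel is `ℝ 𝟏`. The adjugate of `B` thus has columns in `ℝ U` and constant rows, i.e.
`adj B = N₀ U 𝟏ᵀ`; its diagonal entries are the minors `N_j`. Finally `N₀ ≠ 0`: a kernel vector
of the `(0,0)`-minor, padded by a `0`, would lie in `ker B = ℝ U`.
-/

section GeometricSeries

variable {μ : Measure ℝ} {b z : ℝ}

lemma sum_range_pow_div_one_sub_pow {t : ℝ} {k : ℕ} (hk : k ≠ 0) (ht0 : 0 ≤ t) (ht1 : t < 1) :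
    ∑ p ∈ Finset.range k, t ^ p / (1 - t ^ k) = 1 / (1 - t) := by
  have htk : 1 - t ^ k ≠ 0 := (sub_pos.2 (pow_lt_one₀ ht0 ht1 hk)).ne'
  have ht : 1 - t ≠ 0 := (sub_pos.2 ht1).ne'
  have ht' : t - 1 ≠ 0 := sub_ne_zero.2 ht1.ne
  rw [← Finset.sum_div, geom_sum_eq ht1.ne, div_div, div_eq_div_iff (mul_ne_zero ht' htk) ht]
  ring

lemma pow_div_one_sub_pow_le {t : ℝ} {k : ℕ} (p : ℕ) (hk : k ≠ 0) (ht0 : 0 ≤ t) (ht1 : t < 1) :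
    t ^ p / (1 - t ^ k) ≤ 1 / (1 - t) :=
  div_le_div₀ zero_le_one (pow_le_one₀ ht0 ht1.le) (sub_pos.2 ht1)
    (sub_le_sub_left (pow_le_of_le_one ht0 ht1.le hk) 1)

lemma lintegral_tsum_pow_lt_top (hz : 0 ≤ z)
    (hsum : ∑' n : ℕ, ENNReal.ofReal (z ^ n) * ∫⁻ x, ENNReal.ofReal (x ^ n * b) ∂μ < ⊤) :
    ∫⁻ x, ∑' n : ℕ, ENNReal.ofReal ((z * x) ^ n * b) ∂μ < ⊤ := by
  rw [lintegral_tsum fun n => by fun_prop]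
  refine lt_of_eq_of_lt (tsum_congr fun n => ?_) hsum
  rw [← lintegral_const_mul' _ _ ENNReal.ofReal_ne_top]
  congr 1 with x
  rw [← ENNReal.ofReal_mul (pow_nonneg hz n), mul_pow, mul_assoc]

lemma ae_mem_Icc_and_mul_lt_one (hb : 0 < b) (hz : 0 ≤ z) (hμ : μ (Set.Icc 0 1)ᶜ = 0)
    (hsum : ∑' n : ℕ, ENNReal.ofReal (z ^ n) * ∫⁻ x, ENNReal.ofReal (x ^ n * b) ∂μ < ⊤) :
    ∀ᵐ x ∂μ, x ∈ Set.Icc (0:ℝ) 1 ∧ z * x < 1 := by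
  have hfin := ae_lt_top' (by fun_prop) (lintegral_tsum_pow_lt_top hz hsum).ne
  filter_upwards [mem_ae_iff.2 hμ, hfin] with x hx hfx
  refine ⟨hx, lt_of_not_ge fun h => hfx.ne (top_unique ?_)⟩
  calc ⊤ = ∑' _ : ℕ, ENNReal.ofReal b :=
        (ENNReal.tsum_const_eq_top_of_ne_zero (ENNReal.ofReal_pos.2 hb).ne').symm
    _ ≤ ∑' n : ℕ, ENNReal.ofReal ((z * x) ^ n * b) :=
        ENNReal.tsum_le_tsum fun n =>
          ENNReal.ofReal_le_ofReal (le_mul_of_one_le_left hb.le (one_le_pow₀ h))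

lemma integrable_div_one_sub_mul (hb : 0 < b) (hz : 0 ≤ z) (hμ : μ (Set.Icc 0 1)ᶜ = 0)
    (hsum : ∑' n : ℕ, ENNReal.ofReal (z ^ n) * ∫⁻ x, ENNReal.ofReal (x ^ n * b) ∂μ < ⊤) :
    Integrable (fun x => b / (1 - z * x)) μ := by
  have hgood := ae_mem_Icc_and_mul_lt_one hb hz hμ hsum
  have hpos : 0 ≤ᵐ[μ] fun x => b / (1 - z * x) := by
    filter_upwards [hgood] with x hx
    exact div_nonneg hb.le (sub_pos.2 hx.2).le
  refine ⟨(by fun_prop : Measurable _).aestronglyMeasurable,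
    (hasFiniteIntegral_iff_ofReal hpos).2 ?_⟩
  refine lt_of_eq_of_lt (lintegral_congr_ae ?_) (lintegral_tsum_pow_lt_top hz hsum)
  filter_upwards [hgood] with x ⟨hx, hzx⟩
  have hzx0 : 0 ≤ z * x := mul_nonneg hz hx.1
  rw [← ENNReal.ofReal_tsum_of_nonneg (fun n => by positivity)
    ((summable_geometric_of_lt_one hzx0 hzx).mul_right b), tsum_mul_right,
    tsum_geometric_of_lt_one hzx0 hzx, div_eq_inv_mul]

lemma integrable_pow_div_one_sub_pow (hb : 0 < b) (hz : 0 ≤ z) (hμ : μ (Set.Icc 0 1)ᶜ = 0)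
    (hsum : ∑' n : ℕ, ENNReal.ofReal (z ^ n) * ∫⁻ x, ENNReal.ofReal (x ^ n * b) ∂μ < ⊤)
    {k : ℕ} (hk : k ≠ 0) (p : ℕ) :
    Integrable (fun x => (z * x) ^ p / (1 - (z * x) ^ k) * b) μ := by
  refine (integrable_div_one_sub_mul hb hz hμ hsum).mono'
    (by fun_prop : Measurable _).aestronglyMeasurable ?_
  filter_upwards [ae_mem_Icc_and_mul_lt_one hb hz hμ hsum] with x ⟨hx, hzx⟩
  have hzx0 : 0 ≤ z * x := mul_nonneg hz hx.1
  have hden : 0 < 1 - (z * x) ^ k := sub_pos.2 (pow_lt_one₀ hzx0 hzx hk)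
  rw [Real.norm_of_nonneg (by positivity), div_eq_mul_one_div b, mul_comm b]
  exact mul_le_mul_of_nonneg_right (pow_div_one_sub_pow_le p hk hzx0 hzx) hb.le

lemma pos_measure_Ioi_of_etaSup_pos (h : 0 < etaSup μ) : 0 < μ (Set.Ioi 0) := by
  refine pos_iff_ne_zero.2 fun h0 => h.not_ge (Real.sSup_le ?_ le_rfl)
  rintro x ⟨-, hx⟩
  by_contra! hx0
  exact hx.ne' (measure_mono_null (fun y hy => hx0.trans_le hy.1) h0)

end GeometricSeries

section Amat

variable {k : ℕ} {β : Fin k → ℝ} {q : Fin k → Measure ℝ} {z : ℝ}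

lemma memIm.ae_mem_Icc_and_mul_lt_one (hm : memIm k β q z) (hβ : ∀ j, 0 < β j)
    (hq : ∀ j, q j (Set.Icc 0 1)ᶜ = 0) (j : Fin k) :
    ∀ᵐ x ∂q j, x ∈ Set.Icc (0:ℝ) 1 ∧ z * x < 1 :=
  _root_.ae_mem_Icc_and_mul_lt_one (hβ j) hm.1 (hq j) (hm.2 j)

lemma Amat_nonneg (hm : memIm k β q z) (hβ : ∀ j, 0 < β j) (hq : ∀ j, q j (Set.Icc 0 1)ᶜ = 0)
    (i j : Fin k) : 0 ≤ Amat k β q z i j := by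
  refine integral_nonneg_of_ae ?_
  filter_upwards [hm.ae_mem_Icc_and_mul_lt_one hβ hq j] with x ⟨hx, hzx⟩
  have hzx0 : 0 ≤ z * x := mul_nonneg hm.1 hx.1
  have hden : 0 < 1 - (z * x) ^ k := sub_pos.2 (pow_lt_one₀ hzx0 hzx i.pos.ne')
  exact mul_nonneg (div_nonneg (pow_nonneg hzx0 _) hden.le) (hβ j).le

lemma Amat_pos (hm : memIm k β q z) (hβ : ∀ j, 0 < β j) (hq : ∀ j, q j (Set.Icc 0 1)ᶜ = 0)
    (hz : 0 < z) {j : Fin k} (hη : 0 < etaSup (q j)) (i : Fin k) : 0 < Amat k β q z i j := by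
  have hk : k ≠ 0 := i.pos.ne'
  have hgood := hm.ae_mem_Icc_and_mul_lt_one hβ hq j
  have hden : ∀ x, x ∈ Set.Icc (0:ℝ) 1 → z * x < 1 → 0 < 1 - (z * x) ^ k := fun x hx hzx =>
    sub_pos.2 (pow_lt_one₀ (mul_nonneg hz.le hx.1) hzx hk)
  rw [Amat, of_apply, integral_pos_iff_support_of_nonneg_ae ?_
    (integrable_pow_div_one_sub_pow (hβ j) hm.1 (hq j) (hm.2 j) hk _)]
  · refine (pos_measure_Ioi_of_etaSup_pos hη).trans_le (measure_mono_ae ?_)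
    filter_upwards [hgood] with x ⟨hx, hzx⟩ (hx0 : 0 < x)
    exact (mul_pos (div_pos (pow_pos (mul_pos hz hx0) _) (hden x hx hzx)) (hβ j)).ne'
  · filter_upwards [hgood] with x ⟨hx, hzx⟩
    exact mul_nonneg (div_nonneg (pow_nonneg (mul_nonneg hz.le hx.1) _) (hden x hx hzx).le)
      (hβ j).le

lemma sum_Amat_apply (hm : memIm k β q z) (hβ : ∀ j, 0 < β j) (hq : ∀ j, q j (Set.Icc 0 1)ᶜ = 0)
    (j : Fin k) : ∑ i, Amat k β q z i j = rhoFun k β q z j := by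
  have hk : k ≠ 0 := j.pos.ne'
  have : NeZero k := ⟨hk⟩
  calc ∑ i, Amat k β q z i j
      = ∑ p : Fin k, ∫ x, (z * x) ^ (p : ℕ) / (1 - (z * x) ^ k) * β j ∂q j :=
        Fintype.sum_equiv (Equiv.subRight j) _ _ fun _ => rfl
    _ = ∫ x, ∑ p : Fin k, (z * x) ^ (p : ℕ) / (1 - (z * x) ^ k) * β j ∂q j :=
        (integral_finsetSum Finset.univ fun (p : Fin k) _ =>
          integrable_pow_div_one_sub_pow (hβ j) hm.1 (hq j) (hm.2 j) hk (p : ℕ)).symm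
    _ = rhoFun k β q z j := by
        refine integral_congr_ae ?_
        filter_upwards [hm.ae_mem_Icc_and_mul_lt_one hβ hq j] with x ⟨hx, hzx⟩
        rw [← Finset.sum_mul, Fin.sum_univ_eq_sum_range (fun p => (z * x) ^ p / (1 - (z * x) ^ k)),
          sum_range_pow_div_one_sub_pow hk (mul_nonneg hm.1 hx.1) hzx, one_div_mul_eq_div]

lemma Amat_zero [NeZero k] [∀ j, IsProbabilityMeasure (q j)] : Amat k β q 0 = diagonal β := by
  ext i j
  rcases eq_or_ne i j with rfl | hij
  · simp [Amat, zero_pow (NeZero.ne k)]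
  · have hp : ((i - j : Fin k) : ℕ) ≠ 0 := by simpa [Fin.val_eq_zero_iff, sub_eq_zero] using hij
    simp [Amat, hij, zero_pow hp]

end Amat

section Perron

variable {ι : Type*} [Fintype ι] [Nonempty ι] {A : Matrix ι ι ℝ} {U v : ι → ℝ} {α c : ℝ}

lemma exists_smul_le_of_mulVec_eq_add (hU : ∀ i, 0 < U i) (hAU : ∀ i, (A *ᵥ U) i + α = U i)
    (hAv : ∀ i, (A *ᵥ v) i = v i + c) :
    ∃ s i₁, (∀ j, s * U j ≤ v j) ∧ ∑ j, A i₁ j * (v j - s * U j) = c + s * α := by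
  obtain ⟨i₁, -, hmin⟩ :=
    Finset.exists_min_image Finset.univ (fun j => v j / U j) Finset.univ_nonempty
  refine ⟨v i₁ / U i₁, i₁, fun j => (le_div_iff₀ (hU j)).1 (hmin j (Finset.mem_univ j)), ?_⟩
  have h1 := hAv i₁
  have h2 := hAU i₁
  simp only [mulVec, dotProduct] at h1 h2
  simp only [mul_sub, Finset.sum_sub_distrib, h1, mul_left_comm _ (v i₁ / U i₁), ← Finset.mul_sum]
  rw [eq_sub_of_add_eq h2]
  field_simp [(hU i₁).ne']
  ring

lemma eq_smul_of_mulVec_eq_add (hA0 : ∀ i j, 0 ≤ A i j) (hU : ∀ i, 0 < U i)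
    (hAU : ∀ i, (A *ᵥ U) i + α = U i) (hdich : 0 < α ∨ α = 0 ∧ ∀ i j, 0 < A i j)
    (hAv : ∀ i, (A *ᵥ v) i = v i + c) : ∃ s : ℝ, v = s • U := by
  have hnonneg : ∀ {s : ℝ} {w : ι → ℝ} (i : ι), (∀ j, s * U j ≤ w j) →
      ∀ j ∈ Finset.univ, 0 ≤ A i j * (w j - s * U j) :=
    fun i hs j _ => mul_nonneg (hA0 i j) (sub_nonneg.2 (hs j))
  obtain ⟨s, i₁, hs, hsum⟩ := exists_smul_le_of_mulVec_eq_add hU hAU hAv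
  obtain ⟨s', i₀, hs', hsum'⟩ := exists_smul_le_of_mulVec_eq_add (v := -v) (c := -c) hU hAU
    fun i => by rw [mulVec_neg, Pi.neg_apply, Pi.neg_apply, hAv]; ring
  have h₁ : 0 ≤ c + s * α := hsum ▸ Finset.sum_nonneg (hnonneg i₁ hs)
  have h₀ : 0 ≤ -c + s' * α := hsum' ▸ Finset.sum_nonneg (hnonneg i₀ hs')
  have hsand : ∀ j, s * U j ≤ v j ∧ v j ≤ -s' * U j := fun j =>
    ⟨hs j, by linarith [show s' * U j ≤ -v j from hs' j]⟩
  have hss' : s + s' ≤ 0 := by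
    obtain ⟨j⟩ := ‹Nonempty ι›
    nlinarith [hU j, hsand j]
  refine ⟨s, funext fun j => ?_⟩
  rcases hdich with hα | ⟨rfl, hApos⟩
  · have hs's : s' = -s := by nlinarith
    rw [hs's, neg_neg] at hsand
    exact le_antisymm (hsand j).2 (hsand j).1
  · have hterm := (Finset.sum_eq_zero_iff_of_nonneg (hnonneg i₁ hs)).1 (by linarith) j
      (Finset.mem_univ j)
    rcases mul_eq_zero.1 hterm with h | h
    · exact absurd h (hApos i₁ j).ne'
    · simpa [sub_eq_zero] using h

end Perron

section Adjugate

open Module LinearMap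

variable {K : Type*} [Field K]

lemma finrank_ker_mulVecLin_transpose {ι : Type*} [Fintype ι] [DecidableEq ι] (B : Matrix ι ι K) :
    finrank K (ker Bᵀ.mulVecLin) = finrank K (ker B.mulVecLin) := by
  have h := LinearMap.finrank_range_add_finrank_ker B.mulVecLin
  have hT := LinearMap.finrank_range_add_finrank_ker Bᵀ.mulVecLin
  have hrank := B.rank_transpose
  rw [Matrix.rank, Matrix.rank] at hrank
  omega

variable {n : ℕ} {B : Matrix (Fin (n + 1)) (Fin (n + 1)) K} {U : Fin (n + 1) → K}

lemma det_submatrix_succ_ne_zero (hcol : 1 ᵥ* B = 0) (hker : ker B.mulVecLin = K ∙ U)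
    (hU0 : U 0 ≠ 0) : (B.submatrix Fin.succ Fin.succ).det ≠ 0 := by
  intro hdet
  obtain ⟨v, hv0, hv⟩ := exists_mulVec_eq_zero_iff.2 hdet
  set w : Fin (n + 1) → K := Fin.cons 0 v
  have hw_succ : ∀ i : Fin n, (B *ᵥ w) i.succ = 0 := fun i => by
    simpa [mulVec, dotProduct, Fin.sum_univ_succ, w] using congrFun hv i
  have hw_zero : (B *ᵥ w) 0 = 0 := by
    have h := dotProduct_mulVec 1 B w
    rw [hcol, zero_dotProduct, one_dotProduct, Fin.sum_univ_succ] at h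
    simpa [hw_succ] using h
  have hw : w ∈ ker B.mulVecLin := by
    ext i
    exact Fin.cases hw_zero hw_succ i
  obtain ⟨a, ha⟩ := Submodule.mem_span_singleton.1 (hker ▸ hw)
  have ha0 : a = 0 := by simpa [w, hU0] using congrFun ha 0
  exact hv0 (funext fun i => by simpa [w, ha0] using (congrFun ha i.succ).symm)

lemma adjugate_apply_eq_mul (hcol : 1 ᵥ* B = 0) (hker : ker B.mulVecLin = K ∙ U)
    (hU0 : U 0 = 1) (i j : Fin (n + 1)) : B.adjugate i j = B.adjugate 0 0 * U i := by
  have hU : U ≠ 0 := fun h => by simp [h] at hU0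
  have hUker : U ∈ ker B.mulVecLin := hker ▸ Submodule.mem_span_singleton_self U
  have hdet : B.det = 0 := exists_mulVec_eq_zero_iff.1 ⟨U, hU, LinearMap.mem_ker.1 hUker⟩
  have hkerT : ker Bᵀ.mulVecLin = K ∙ 1 := by
    refine (Submodule.eq_of_le_of_finrank_eq ?_ ?_).symm
    · rw [Submodule.span_singleton_le_iff_mem, LinearMap.mem_ker, mulVecLin_apply,
        mulVec_transpose, hcol]
    · rw [finrank_ker_mulVecLin_transpose, hker, finrank_span_singleton hU,
        finrank_span_singleton one_ne_zero]
  have hcols : ∀ j, ∃ t : K, t • U = fun i => B.adjugate i j := fun j => by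
    refine Submodule.mem_span_singleton.1 (hker ▸ ?_)
    ext i
    simpa [hdet, mul_apply, mulVec, dotProduct] using congrFun₂ B.mul_adjugate i j
  have hrows : ∀ i, ∃ a : K, a • 1 = B.adjugate i := fun i => by
    refine Submodule.mem_span_singleton.1 (hkerT ▸ ?_)
    ext j
    simpa [hdet, mul_apply, vecMul, dotProduct, mul_comm] using congrFun₂ B.adjugate_mul i j
  obtain ⟨t, ht⟩ := hcols 0
  obtain ⟨a, ha⟩ := hrows i
  have hrow_const : B.adjugate i j = B.adjugate i 0 := by
    rw [← ha]; rfl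
  rw [hrow_const, ← congrFun ht i, ← congrFun ht 0]
  simp [hU0]

lemma adjugate_apply_self (j : Fin (n + 1)) :
    B.adjugate j j = (B.submatrix j.succAbove j.succAbove).det := by
  rw [adjugate_fin_succ_eq_det_submatrix, ← two_mul, pow_mul, neg_one_sq, one_pow, one_mul]

theorem det_submatrix_succAbove_eq_mul (hcol : 1 ᵥ* B = 0) (hker : ker B.mulVecLin = K ∙ U)
    (hU0 : U 0 = 1) (j : Fin (n + 1)) :
    (B.submatrix j.succAbove j.succAbove).det = (B.submatrix Fin.succ Fin.succ).det * U j := by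
  rw [← adjugate_apply_self, adjugate_apply_eq_mul hcol hker hU0 j j, adjugate_apply_self,
    Fin.succAbove_zero]

end Adjugate

section Bmat

variable {n : ℕ} {A : Matrix (Fin (n + 1)) (Fin (n + 1)) ℝ} {ρ U : Fin (n + 1) → ℝ} {α : ℝ}

def Bmat (A : Matrix (Fin (n + 1)) (Fin (n + 1)) ℝ) (ρ : Fin (n + 1) → ℝ) :
    Matrix (Fin (n + 1)) (Fin (n + 1)) ℝ :=
  A - 1 - ((n + 1 : ℝ))⁻¹ • Matrix.of fun _ j => ρ j - 1

lemma vecMul_one_Bmat (hcol : 1 ᵥ* A = ρ) : 1 ᵥ* Bmat A ρ = 0 := by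
  ext j
  have hcolj := congrFun hcol j
  simp only [vecMul, dotProduct, Pi.one_apply, one_mul] at hcolj
  simp only [vecMul, dotProduct, Pi.one_apply, Bmat, smul_of, Matrix.sub_apply, Matrix.one_apply,
    of_apply, Pi.smul_apply, smul_eq_mul, one_mul, Finset.sum_sub_distrib, hcolj,
    Finset.sum_ite_eq', Finset.mem_univ, if_true, Finset.sum_const, Finset.card_univ,
    Fintype.card_fin, nsmul_eq_mul, Nat.cast_add, Nat.cast_one, Pi.zero_apply]
  field_simp
  ring

lemma Bmat_mulVec_apply (v : Fin (n + 1) → ℝ) (i : Fin (n + 1)) :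
    (Bmat A ρ *ᵥ v) i = (A *ᵥ v) i - v i - ((n + 1 : ℝ))⁻¹ * ∑ j, (ρ j - 1) * v j := by
  rw [Finset.mul_sum]
  simp only [Bmat, mulVec, dotProduct, Matrix.sub_apply, Matrix.smul_apply, of_apply, smul_eq_mul,
    sub_mul, Finset.sum_sub_distrib, Matrix.one_apply, ite_mul, one_mul, zero_mul,
    Finset.sum_ite_eq, Finset.mem_univ, if_true, mul_assoc]

lemma Bmat_mulVec_eq_zero (hcol : 1 ᵥ* A = ρ) (hAU : ∀ i, (A *ᵥ U) i + α = U i) :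
    Bmat A ρ *ᵥ U = 0 := by
  set c := ((n + 1 : ℝ))⁻¹ * ∑ j, (ρ j - 1) * U j
  have hconst : ∀ i, (Bmat A ρ *ᵥ U) i = -(α + c) := fun i => by
    rw [Bmat_mulVec_apply]
    linarith [hAU i]
  have h := dotProduct_mulVec 1 (Bmat A ρ) U
  rw [vecMul_one_Bmat hcol, zero_dotProduct, one_dotProduct] at h
  simp only [hconst, Finset.sum_const, Finset.card_univ, Fintype.card_fin, nsmul_eq_mul] at h
  ext i
  rw [hconst]
  exact (mul_eq_zero.1 h).resolve_left (by positivity)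

lemma eq_inv_mul_sum_of_mulVec_add_eq (hcol : 1 ᵥ* A = ρ) (hAU : ∀ i, (A *ᵥ U) i + α = U i) :
    α = ((n + 1 : ℝ))⁻¹ * ∑ j, (1 - ρ j) * U j := by
  have h := congrFun (Bmat_mulVec_eq_zero hcol hAU) 0
  have hsum : ∑ j, (1 - ρ j) * U j = -∑ j, (ρ j - 1) * U j := by
    rw [← Finset.sum_neg_distrib]
    exact Finset.sum_congr rfl fun j _ => by ring
  rw [Bmat_mulVec_apply, Pi.zero_apply] at h
  rw [hsum]
  linarith [hAU 0]

lemma ker_Bmat_eq_span (hcol : 1 ᵥ* A = ρ) (hA0 : ∀ i j, 0 ≤ A i j) (hU : ∀ i, 0 < U i)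
    (hAU : ∀ i, (A *ᵥ U) i + α = U i) (hdich : 0 < α ∨ α = 0 ∧ ∀ i j, 0 < A i j) :
    LinearMap.ker (Bmat A ρ).mulVecLin = ℝ ∙ U := by
  refine le_antisymm (fun v hv => ?_) ?_
  · have hBv : Bmat A ρ *ᵥ v = 0 := LinearMap.mem_ker.1 hv
    obtain ⟨s, rfl⟩ := eq_smul_of_mulVec_eq_add (v := v)
      (c := ((n + 1 : ℝ))⁻¹ * ∑ j, (ρ j - 1) * v j) hA0 hU hAU hdich fun i => by
      have := congrFun hBv i
      rw [Bmat_mulVec_apply, Pi.zero_apply] at this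
      linarith
    exact Submodule.smul_mem _ s (Submodule.mem_span_singleton_self U)
  · rw [Submodule.span_singleton_le_iff_mem]
    exact Bmat_mulVec_eq_zero hcol hAU

end Bmat

theorem stmt_4_general (m : ℕ) (β : Fin (m + 1) → ℝ) (q : Fin (m + 1) → Measure ℝ)
    [∀ i, IsProbabilityMeasure (q i)] (p₀ : Measure ℝ)
    (hβ : ∀ i, β i ∈ Set.Ioo (0:ℝ) 1)
    (hq : ∀ i, q i (Set.Icc (0:ℝ) 1)ᶜ = 0)
    (hη : ∀ i, 0 < etaSup (q i) ∧ etaSup (q i) ≤ etaSup p₀)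
    (z_c α : ℝ) (U : Fin (m + 1) → ℝ)
    (hU : ∀ i, 0 < U i) (hU0 : U 0 = 1)
    (heq : ∀ i, (Amat (m + 1) β q z_c).mulVec U i + α = U i)
    (hcase1 : (memIm (m + 1) β q (1 / etaSup p₀) ∧
        0 < (1 - Amat (m + 1) β q (1 / etaSup p₀)).det) →
      z_c = 1 / etaSup p₀ ∧ 0 < α)
    (hcase2 : ¬ (memIm (m + 1) β q (1 / etaSup p₀) ∧
        0 < (1 - Amat (m + 1) β q (1 / etaSup p₀)).det) →
      memIm (m + 1) β q z_c ∧ α = 0)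
    (Bm : Matrix (Fin (m + 1)) (Fin (m + 1)) ℝ)
    (hB : Bm = Amat (m + 1) β q z_c - 1
      - ((m + 1 : ℝ))⁻¹ • Matrix.of (fun _ j => rhoFun (m + 1) β q z_c j - 1))
    (N : Fin (m + 1) → ℝ)
    (hN : ∀ j, N j = (Bm.submatrix j.succAbove j.succAbove).det) :
    N 0 ≠ 0 ∧ (∀ j, U j = N j / N 0) ∧
      α = ((m + 1 : ℝ))⁻¹ * ∑ j, (N j / N 0) * (1 - rhoFun (m + 1) β q z_c j) := by
  have hβ0 : ∀ i, 0 < β i := fun i => (hβ i).1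
  obtain ⟨hmem, hα⟩ : memIm (m + 1) β q z_c ∧ (0 < α ∨ α = 0) := by
    by_cases h : memIm (m + 1) β q (1 / etaSup p₀) ∧
        0 < (1 - Amat (m + 1) β q (1 / etaSup p₀)).det
    · exact ⟨(hcase1 h).1 ▸ h.1, Or.inl (hcase1 h).2⟩
    · exact ⟨(hcase2 h).1, Or.inr (hcase2 h).2⟩
  have hdich : 0 < α ∨ α = 0 ∧ ∀ i j, 0 < Amat (m + 1) β q z_c i j := by
    refine hα.imp_right fun hα => ⟨hα, fun i j => Amat_pos hmem hβ0 hq ?_ (hη j).1 i⟩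
    -- `A(0)` is the diagonal matrix `β`, and `β₀ U₀ = U₀` is impossible for `β₀ < 1`.
    refine hmem.1.lt_of_ne fun hz => (hβ 0).2.ne ?_
    have h0 := heq 0
    rw [← hz, Amat_zero, mulVec_diagonal, hα, hU0] at h0
    simpa using h0
  have hcol : 1 ᵥ* Amat (m + 1) β q z_c = rhoFun (m + 1) β q z_c := funext fun j => by
    simpa [vecMul, dotProduct] using sum_Amat_apply hmem hβ0 hq j
  have hker := ker_Bmat_eq_span hcol (Amat_nonneg hmem hβ0 hq) hU heq hdich
  have hBcol := vecMul_one_Bmat hcol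
  rw [show Bm = Bmat _ _ from hB] at hN
  have hN0 : N 0 ≠ 0 := by
    rw [hN, Fin.succAbove_zero]
    exact det_submatrix_succ_ne_zero hBcol hker (by simp [hU0])
  have hUN : ∀ j, U j = N j / N 0 := fun j => by
    rw [eq_div_iff hN0, hN j, hN 0, det_submatrix_succAbove_eq_mul hBcol hker hU0 j,
      Fin.succAbove_zero, mul_comm]
  refine ⟨hN0, hUN, ?_⟩
  rw [eq_inv_mul_sum_of_mulVec_add_eq hcol heq]
  exact congrArg _ (Finset.sum_congr rfl fun j _ => by rw [← hUN j, mul_comm])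

/-- With `B(z_c) = A(z_c) − I − (1/k)(ρ_j(z_c) − 1)_{i,j}` and `N j` the
`(j,j)`-minor of `B(z_c)`, one has `N₀ ≠ 0`, `U j = N j / N₀` for each `j`, and
`α = (1/k) ∑_j (N j / N₀)(1 − ρ_j(z_c))`.  Here `(z_c, U, α)` is the solution of the
dichotomy: if `1/η₀ ∈ I_μ` and `det (I − A(1/η₀)) > 0` then `z_c = 1/η₀` and `α > 0`;
otherwise `z_c ∈ I_μ` and `α = 0`; in both cases `U` has positive coordinates, `U₀ = 1`
and `A(z_c) U + α·𝟏 = U`.  (We write `k = m + 1`.) -/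
theorem stmt_4 (m : ℕ) (β : Fin (m + 1) → ℝ) (q : Fin (m + 1) → Measure ℝ)
    [∀ i, IsProbabilityMeasure (q i)] (p₀ : Measure ℝ) [IsProbabilityMeasure p₀]
    (hβ : ∀ i, β i ∈ Set.Ioo (0:ℝ) 1)
    (hq : ∀ i, q i (Set.Icc (0:ℝ) 1)ᶜ = 0) (hp₀ : p₀ (Set.Icc (0:ℝ) 1)ᶜ = 0)
    (hη : ∀ i, 0 < etaSup (q i) ∧ etaSup (q i) ≤ etaSup p₀)
    (z_c α : ℝ) (U : Fin (m + 1) → ℝ)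
    (hU : ∀ i, 0 < U i) (hU0 : U 0 = 1)
    (heq : ∀ i, (Amat (m + 1) β q z_c).mulVec U i + α = U i)
    (hcase1 : (memIm (m + 1) β q (1 / etaSup p₀) ∧
        0 < (1 - Amat (m + 1) β q (1 / etaSup p₀)).det) →
      z_c = 1 / etaSup p₀ ∧ 0 < α)
    (hcase2 : ¬ (memIm (m + 1) β q (1 / etaSup p₀) ∧
        0 < (1 - Amat (m + 1) β q (1 / etaSup p₀)).det) →
      memIm (m + 1) β q z_c ∧ α = 0)
    (Bm : Matrix (Fin (m + 1)) (Fin (m + 1)) ℝ)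
    (hB : Bm = Amat (m + 1) β q z_c - 1
      - ((m + 1 : ℝ))⁻¹ • Matrix.of (fun _ j => rhoFun (m + 1) β q z_c j - 1))
    (N : Fin (m + 1) → ℝ)
    (hN : ∀ j, N j = (Bm.submatrix j.succAbove j.succAbove).det) :
    N 0 ≠ 0 ∧ (∀ j, U j = N j / N 0) ∧
      α = ((m + 1 : ℝ))⁻¹ * ∑ j, (N j / N 0) * (1 - rhoFun (m + 1) β q z_c j) :=
  stmt_4_general m β q p₀ hβ hq hη z_c α U hU hU0 heq hcase1 hcase2 Bm hB N hN
end
end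

section
/- The limits w̄_i := lim_{n→∞} w_{kn+i} of the mean fitness subsequences satisfy the bound η₀^k · Π_{i∈K} (1 − β_i)/w̄_i ≤ 1. -/
open MeasureTheory Matrix Filter

noncomputable section

/-- Convergence in total variation on a set `s ⊆ ℝ`: for all `ε > 0`, eventually
`|p_n(A) − π(A)| < ε` uniformly over measurable subsets `A ⊆ s`. -/
def TVConvOn (p : ℕ → Measure ℝ) (π : Measure ℝ) (s : Set ℝ) : Prop :=
  ∀ ε : ℝ, 0 < ε → ∃ N : ℕ, ∀ n ≥ N, ∀ A : Set ℝ, MeasurableSet A → A ⊆ s →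
    |((p n) A).toReal - (π A).toReal| < ε

/-- Weak convergence of measures (supported in a compact interval): convergence of integrals of
continuous test functions. -/
def WeakConv (p : ℕ → Measure ℝ) (π : Measure ℝ) : Prop :=
  ∀ f : ℝ → ℝ, Continuous f →
    Tendsto (fun n => ∫ x, f x ∂(p n)) atTop (nhds (∫ x, f x ∂π))

open Fin.NatCast in
/-- Kingman's periodic recursion:
`p_{n+1}(dx) = β_{[n+1]} q_{[n+1]}(dx) + (1 − β_{[n+1]}) x p_n(dx) / w_n`,
where `w n = ∫ x p_n(dx)`. -/
def KingmanRec (k : ℕ) [NeZero k] (β : Fin k → ℝ) (q : Fin k → Measure ℝ)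
    (p : ℕ → Measure ℝ) (w : ℕ → ℝ) : Prop :=
  (∀ n, w n = ∫ x, x ∂(p n)) ∧
  ∀ n : ℕ, p (n + 1) = ENNReal.ofReal (β ((n + 1 : ℕ) : Fin k)) • q ((n + 1 : ℕ) : Fin k)
    + (p n).withDensity fun x => ENNReal.ofReal ((1 - β ((n + 1 : ℕ) : Fin k)) * x / w n)

/-!
For `0 < a < η₀` follow the mass `m n = p_n([a,1])`. It starts positive, and the selection term
of the recursion multiplies it by at least `(1 - β_{[n+1]}) a / w_n`, so over one period it is
multiplied by at least a factor tending to `a ^ k * ∏ i, (1 - β i) / w̄ i`. Every `p_n` has mass at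
most `1`, so `m` is bounded and this factor is at most `1`; now let `a` increase to `η₀`.
-/

open Set Finset Topology

section UnitIntervalSupport

variable {μ : Measure ℝ}

lemma integral_id_nonneg_of_ae_mem_Icc (hμ : ∀ᵐ x ∂μ, x ∈ Icc (0:ℝ) 1) :
    0 ≤ ∫ x, x ∂μ :=
  integral_nonneg_of_ae (hμ.mono fun _ hx => hx.1)

lemma integrable_id_of_ae_mem_Icc [IsFiniteMeasure μ] (hμ : ∀ᵐ x ∂μ, x ∈ Icc (0:ℝ) 1) :
    Integrable (fun x : ℝ => x) μ :=
  (integrable_const (1:ℝ)).mono' measurable_id.aestronglyMeasurable <|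
    hμ.mono fun x hx => by rw [Real.norm_eq_abs, abs_le]; exact ⟨by linarith [hx.1], hx.2⟩

lemma mul_measureReal_Icc_le_integral [IsFiniteMeasure μ] (hμ : ∀ᵐ x ∂μ, x ∈ Icc (0:ℝ) 1)
    (a : ℝ) : a * μ.real (Icc a 1) ≤ ∫ x, x ∂μ := by
  have hle : (Icc a 1).indicator (fun _ => a) ≤ᵐ[μ] fun x => x := by
    filter_upwards [hμ] with x hx
    by_cases hxa : x ∈ Icc a 1
    · rw [indicator_of_mem hxa]; exact hxa.1
    · rw [indicator_of_notMem hxa]; exact hx.1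
  calc a * μ.real (Icc a 1) = ∫ x, (Icc a 1).indicator (fun _ => a) x ∂μ := by
        rw [integral_indicator_const _ measurableSet_Icc, smul_eq_mul, mul_comm]
    _ ≤ ∫ x, x ∂μ := integral_mono_ae ((integrable_const a).indicator measurableSet_Icc)
        (integrable_id_of_ae_mem_Icc hμ) hle

lemma withDensity_mul_div_integral_univ_le [IsFiniteMeasure μ]
    (hμ : ∀ᵐ x ∂μ, x ∈ Icc (0:ℝ) 1) {c : ℝ} (hc : 0 ≤ c) :
    μ.withDensity (fun x => ENNReal.ofReal (c * x / ∫ y, y ∂μ)) univ ≤ ENNReal.ofReal c := by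
  set w := ∫ y, y ∂μ with hw
  have hcw : 0 ≤ c / w := div_nonneg hc (integral_id_nonneg_of_ae_mem_Icc hμ)
  calc μ.withDensity (fun x => ENNReal.ofReal (c * x / w)) univ
      = ∫⁻ x, ENNReal.ofReal (c / w) * ENNReal.ofReal x ∂μ := by
        rw [withDensity_apply _ MeasurableSet.univ, Measure.restrict_univ]
        simp_rw [← ENNReal.ofReal_mul hcw, mul_div_right_comm]
    _ = ENNReal.ofReal (c / w * w) := by
        rw [lintegral_const_mul _ ENNReal.measurable_ofReal, ENNReal.ofReal_mul hcw, hw,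
          ofReal_integral_eq_lintegral_ofReal (integrable_id_of_ae_mem_Icc hμ)
            (hμ.mono fun _ hx => hx.1)]
    _ ≤ ENNReal.ofReal c := by
        refine ENNReal.ofReal_le_ofReal ?_
        rcases eq_or_ne w 0 with h | h
        · simpa [h] using hc
        · rw [div_mul_cancel₀ _ h]

lemma ofReal_mul_measure_Icc_le_withDensity {c w : ℝ} (hc : 0 ≤ c) (hw : 0 ≤ w) (a : ℝ) :
    ENNReal.ofReal (c * a / w) * μ (Icc a 1)
      ≤ μ.withDensity (fun x => ENNReal.ofReal (c * x / w)) (Icc a 1) := by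
  rw [withDensity_apply _ measurableSet_Icc, ← setLIntegral_const]
  exact setLIntegral_mono (by fun_prop) fun x hx => ENNReal.ofReal_le_ofReal (by gcongr; exact hx.1)

end UnitIntervalSupport

lemma mul_prod_range_le_of_mul_le {r m : ℕ → ℝ} (hr : ∀ n, 0 ≤ r n)
    (hm : ∀ n, r n * m n ≤ m (n + 1)) (n t : ℕ) :
    (∏ j ∈ range t, r (n + j)) * m n ≤ m (n + t) := by
  induction t with
  | zero => simp
  | succ t ih =>
    calc (∏ j ∈ range (t + 1), r (n + j)) * m n
        = r (n + t) * ((∏ j ∈ range t, r (n + j)) * m n) := by rw [prod_range_succ]; ring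
      _ ≤ r (n + t) * m (n + t) := mul_le_mul_of_nonneg_left ih (hr _)
      _ ≤ m (n + (t + 1)) := hm _

lemma le_one_of_bddAbove_of_mul_le {c x : ℕ → ℝ} {C : ℝ} (hx : ∀ n, 0 < x n)
    (hbdd : BddAbove (range x)) (hc : Tendsto c atTop (𝓝 C))
    (hcx : ∀ n, c n * x n ≤ x (n + 1)) : C ≤ 1 := by
  by_contra! hC
  obtain ⟨C', hC'1, hC'C⟩ := exists_between hC
  obtain ⟨N, hN⟩ := eventually_atTop.mp (hc.eventually (lt_mem_nhds hC'C))
  have hgeom : Tendsto (fun t => x (N + t)) atTop atTop :=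
    tendsto_atTop_of_geom_le (hx N) hC'1 fun t =>
      (mul_le_mul_of_nonneg_right (hN (N + t) (by omega)).le (hx _).le).trans (hcx _)
  exact not_bddAbove_of_tendsto_atTop hgeom
    (hbdd.mono (range_subset_iff.mpr fun t => mem_range_self _))

lemma measure_Icc_pos_of_lt_etaSup {μ : Measure ℝ} {a : ℝ} (ha : 0 ≤ a)
    (h : a < etaSup μ) : 0 < μ (Icc a 1) := by
  have hne : {x | x ∈ Icc (0:ℝ) 1 ∧ 0 < μ (Icc x 1)}.Nonempty := by
    by_contra hS
    rw [Set.not_nonempty_iff_eq_empty] at hS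
    rw [etaSup, hS, Real.sSup_empty] at h
    linarith
  obtain ⟨y, hy, hay⟩ := exists_lt_of_lt_csSup hne h
  exact hy.2.trans_le (measure_mono (Icc_subset_Icc hay.le le_rfl))

lemma etaSup_nonneg (μ : Measure ℝ) : 0 ≤ etaSup μ :=
  Real.sSup_nonneg fun _ hx => hx.1.1

open Fin.NatCast in
lemma Fin.natCast_mul_add_add_one (k n : ℕ) [NeZero k] (j : Fin k) :
    ((k * n + j + 1 : ℕ) : Fin k) = j + 1 := by
  simp [Fin.cast_val_eq_self]

open Fin.NatCast in
lemma tendsto_prod_mul_div {k : ℕ} [NeZero k] {β : Fin k → ℝ} {w : ℕ → ℝ} {wbar : Fin k → ℝ}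
    (hconv : ∀ i : Fin k, Tendsto (fun n => w (k * n + (i : ℕ))) atTop (𝓝 (wbar i)))
    (hwbar : ∀ i, wbar i ≠ 0) (a : ℝ) :
    Tendsto (fun n => ∏ j : Fin k, (1 - β ((k * n + j + 1 : ℕ) : Fin k)) * a / w (k * n + j))
      atTop (𝓝 (a ^ k * ∏ i, (1 - β i) / wbar i)) := by
  have hlim := tendsto_finsetProd univ fun j _ =>
    (tendsto_const_nhds (x := (1 - β (j + 1)) * a)).div (hconv j) (hwbar j)
  have hshift : ∏ j : Fin k, (1 - β (j + 1)) = ∏ i : Fin k, (1 - β i) :=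
    Fintype.prod_equiv (Equiv.addRight 1) _ _ fun _ => rfl
  convert hlim using 2 with n
  · simp only [Fin.natCast_mul_add_add_one, Pi.div_apply]
  · rw [prod_div_distrib, prod_div_distrib, prod_mul_distrib, hshift, prod_const, card_univ,
      Fintype.card_fin]
    ring

namespace KingmanRec

open Fin.NatCast

variable {k : ℕ} [NeZero k] {β : Fin k → ℝ} {q : Fin k → Measure ℝ} {p : ℕ → Measure ℝ}
  {w : ℕ → ℝ}

lemma ae_mem_Icc (hrec : KingmanRec k β q p w) (hq : ∀ i, q i (Icc (0:ℝ) 1)ᶜ = 0)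
    (h0 : p 0 (Icc (0:ℝ) 1)ᶜ = 0) (n : ℕ) : ∀ᵐ x ∂(p n), x ∈ Icc (0:ℝ) 1 := by
  change Icc (0:ℝ) 1 ∈ ae (p n)
  rw [mem_ae_iff]
  induction n with
  | zero => exact h0
  | succ n ih =>
    rw [hrec.2 n, Measure.add_apply, Measure.smul_apply, smul_eq_mul, hq, mul_zero, zero_add,
      withDensity_apply _ measurableSet_Icc.compl, setLIntegral_measure_zero _ _ ih]

lemma w_nonneg (hrec : KingmanRec k β q p w) (hsupp : ∀ n, ∀ᵐ x ∂(p n), x ∈ Icc (0:ℝ) 1)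
    (n : ℕ) : 0 ≤ w n :=
  hrec.1 n ▸ integral_id_nonneg_of_ae_mem_Icc (hsupp n)

lemma measure_univ_le_one (hrec : KingmanRec k β q p w) (hβ : ∀ i, β i ∈ Icc (0:ℝ) 1)
    [∀ i, IsProbabilityMeasure (q i)] (hsupp : ∀ n, ∀ᵐ x ∂(p n), x ∈ Icc (0:ℝ) 1)
    (h0 : p 0 univ ≤ 1) (n : ℕ) : p n univ ≤ 1 := by
  induction n with
  | zero => exact h0
  | succ n ih =>
    have : IsFiniteMeasure (p n) := ⟨ih.trans_lt ENNReal.one_lt_top⟩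
    obtain ⟨hβ0, hβ1⟩ := hβ ((n + 1 : ℕ) : Fin k)
    calc p (n + 1) univ
        ≤ ENNReal.ofReal (β ((n + 1 : ℕ) : Fin k))
          + ENNReal.ofReal (1 - β ((n + 1 : ℕ) : Fin k)) := by
          rw [hrec.2 n, Measure.add_apply, Measure.smul_apply, measure_univ, smul_eq_mul,
            mul_one, hrec.1 n]
          gcongr
          exact withDensity_mul_div_integral_univ_le (hsupp n) (by linarith)
      _ = 1 := by rw [← ENNReal.ofReal_add hβ0 (by linarith)]; simp

lemma measure_Icc_le_measure_Icc_succ (hrec : KingmanRec k β q p w) (hβ : ∀ i, β i ≤ 1)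
    {n : ℕ} (hw : 0 ≤ w n) (a : ℝ) :
    ENNReal.ofReal ((1 - β ((n + 1 : ℕ) : Fin k)) * a / w n) * p n (Icc a 1)
      ≤ p (n + 1) (Icc a 1) := by
  rw [hrec.2 n, Measure.add_apply]
  exact (ofReal_mul_measure_Icc_le_withDensity (by linarith [hβ ((n + 1 : ℕ) : Fin k)]) hw a).trans
    le_add_self

lemma measure_Icc_pos (hrec : KingmanRec k β q p w) (hβ : ∀ i, β i < 1)
    (hsupp : ∀ n, ∀ᵐ x ∂(p n), x ∈ Icc (0:ℝ) 1) (hfin : ∀ n, IsFiniteMeasure (p n))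
    {a : ℝ} (ha : 0 < a) (ha0 : 0 < p 0 (Icc a 1)) (n : ℕ) : 0 < p n (Icc a 1) := by
  induction n with
  | zero => exact ha0
  | succ n ih =>
    have hwn : 0 < w n := by
      have hmass : 0 < (p n).real (Icc a 1) := ENNReal.toReal_pos ih.ne' (measure_ne_top _ _)
      rw [hrec.1 n]
      exact (mul_pos ha hmass).trans_le (mul_measureReal_Icc_le_integral (hsupp n) a)
    have hβn := sub_pos.mpr (hβ ((n + 1 : ℕ) : Fin k))
    refine lt_of_lt_of_le ?_ (hrec.measure_Icc_le_measure_Icc_succ (fun i => (hβ i).le) hwn.le a)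
    exact ENNReal.mul_pos (ENNReal.ofReal_pos.mpr (by positivity)).ne' ih.ne'

lemma pow_mul_prod_le_one (hrec : KingmanRec k β q p w) (hβ : ∀ i, β i ∈ Ioo (0:ℝ) 1)
    [∀ i, IsProbabilityMeasure (q i)] (hsupp : ∀ n, ∀ᵐ x ∂(p n), x ∈ Icc (0:ℝ) 1)
    (h0 : p 0 univ ≤ 1) {wbar : Fin k → ℝ} (hwbar : ∀ i, 0 < wbar i)
    (hconv : ∀ i : Fin k, Tendsto (fun n => w (k * n + (i : ℕ))) atTop (𝓝 (wbar i)))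
    {a : ℝ} (ha : 0 < a) (ha0 : 0 < p 0 (Icc a 1)) :
    a ^ k * ∏ i, (1 - β i) / wbar i ≤ 1 := by
  have hle_one := hrec.measure_univ_le_one (fun i => Ioo_subset_Icc_self (hβ i)) hsupp h0
  have hfin n : IsFiniteMeasure (p n) := ⟨(hle_one n).trans_lt ENNReal.one_lt_top⟩
  set r : ℕ → ℝ := fun n => (1 - β ((n + 1 : ℕ) : Fin k)) * a / w n
  set m : ℕ → ℝ := fun n => (p n).real (Icc a 1)
  have hr n : 0 ≤ r n :=
    div_nonneg (mul_nonneg (sub_nonneg.mpr (hβ _).2.le) ha.le) (hrec.w_nonneg hsupp n)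
  have hm_step n : r n * m n ≤ m (n + 1) := by
    have h := ENNReal.toReal_mono (measure_ne_top _ _)
      (hrec.measure_Icc_le_measure_Icc_succ (fun i => (hβ i).2.le) (hrec.w_nonneg hsupp n) a)
    rwa [ENNReal.toReal_mul, ENNReal.toReal_ofReal (hr n)] at h
  have hm_pos n : 0 < m n := ENNReal.toReal_pos
    (hrec.measure_Icc_pos (fun i => (hβ i).2) hsupp hfin ha ha0 n).ne' (measure_ne_top _ _)
  have hm_le n : m n ≤ 1 := ENNReal.toReal_le_of_le_ofReal zero_le_one
    ((measure_mono (subset_univ _)).trans (by simpa using hle_one n))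
  refine le_one_of_bddAbove_of_mul_le (x := fun n => m (k * n)) (fun n => hm_pos _)
    ⟨1, forall_mem_range.mpr fun n => hm_le _⟩
    (tendsto_prod_mul_div hconv (fun i => (hwbar i).ne') a) fun n => ?_
  rw [Fin.prod_univ_eq_prod_range (fun j => r (k * n + j)), mul_add_one]
  exact mul_prod_range_le_of_mul_le hr hm_step _ _

end KingmanRec

open Fin.NatCast in
theorem stmt_9_general (k : ℕ) [NeZero k] (β : Fin k → ℝ) (q : Fin k → Measure ℝ)
    [∀ i, IsProbabilityMeasure (q i)]
    (p₀ : Measure ℝ) [IsProbabilityMeasure p₀]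
    (hβ : ∀ i, β i ∈ Set.Ioo (0:ℝ) 1)
    (hq : ∀ i, q i (Set.Icc (0:ℝ) 1)ᶜ = 0) (hp₀ : p₀ (Set.Icc (0:ℝ) 1)ᶜ = 0)
    (p : ℕ → Measure ℝ) (w : ℕ → ℝ)
    (hp0 : p 0 = p₀) (hrec : KingmanRec k β q p w)
    (wbar : Fin k → ℝ)
    (hconv : ∀ i : Fin k, Tendsto (fun n => w (k * n + (i : ℕ))) atTop (nhds (wbar i))) :
    etaSup p₀ ^ k * ∏ i, (1 - β i) / wbar i ≤ 1 := by
  subst hp0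
  have hsupp := hrec.ae_mem_Icc hq hp₀
  rcases (etaSup_nonneg (p 0)).eq_or_lt with hη | hη
  · simp [← hη, zero_pow (NeZero.ne k)]
  by_cases hwbar : ∀ i, 0 < wbar i
  swap
  -- with `x / 0 = 0`, a vanishing limit `wbar i` makes the product `0`
  · obtain ⟨i, hi⟩ := not_forall.mp hwbar
    have hi0 : wbar i = 0 := (not_lt.mp hi).antisymm
      (ge_of_tendsto' (hconv i) fun n => hrec.w_nonneg hsupp _)
    rw [prod_eq_zero (mem_univ i) (by simp [hi0]), mul_zero]
    exact zero_le_one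
  have hcont : Tendsto (fun a => a ^ k * ∏ i, (1 - β i) / wbar i) (𝓝[<] etaSup (p 0))
      (𝓝 (etaSup (p 0) ^ k * ∏ i, (1 - β i) / wbar i)) :=
    (Continuous.tendsto (by fun_prop) _).mono_left nhdsWithin_le_nhds
  refine le_of_tendsto hcont ?_
  filter_upwards [Ioo_mem_nhdsLT hη] with a ha
  exact hrec.pow_mul_prod_le_one hβ hsupp measure_univ.le hwbar hconv ha.1
    (measure_Icc_pos_of_lt_etaSup ha.1.le ha.2)

/-- The limits `w̄_i := lim_n w_{kn+i}` of the mean fitness subsequences satisfy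
`η₀^k · ∏_{i∈K} (1 − β_i)/w̄_i ≤ 1`. -/
theorem stmt_9 (k : ℕ) [NeZero k] (β : Fin k → ℝ) (q : Fin k → Measure ℝ)
    [∀ i, IsProbabilityMeasure (q i)]
    (p₀ : Measure ℝ) [IsProbabilityMeasure p₀]
    (hβ : ∀ i, β i ∈ Set.Ioo (0:ℝ) 1)
    (hq : ∀ i, q i (Set.Icc (0:ℝ) 1)ᶜ = 0) (hp₀ : p₀ (Set.Icc (0:ℝ) 1)ᶜ = 0)
    (hη : ∀ i, 0 < etaSup (q i) ∧ etaSup (q i) ≤ etaSup p₀)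
    (p : ℕ → Measure ℝ) (w : ℕ → ℝ)
    (hp0 : p 0 = p₀) (hrec : KingmanRec k β q p w)
    (wbar : Fin k → ℝ)
    (hconv : ∀ i : Fin k, Tendsto (fun n => w (k * n + (i : ℕ))) atTop (nhds (wbar i))) :
    etaSup p₀ ^ k * ∏ i, (1 - β i) / wbar i ≤ 1 :=
  stmt_9_general k β q p₀ hβ hq hp₀ p w hp0 hrec wbar hconv
end
end

section
/- Let B be a k×k matrix with nonnegative real entries such that for every i ∈ {0,…,k−1} one has B_{i,i} > B_{i,[i+1]} > B_{i,[i+2]} > ⋯ > B_{i,[i+k−1]} > max{B_{i,i} − 1, 0}, where [m] denotes m mod k. Then there is no vector U ∈ ℝ^k having both a strictly positive coordinate and a strictly negative coordinate which satisfies B U = λ U for some real number λ ≥ 1. -/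
open Matrix
open Fin.NatCast

/-!
Suppose `B U = λ U` with `U` of both signs; replacing `U` by `-U` we may assume `∑ j, U j ≥ 0`.
A cycle lemma then gives an index `i` with `U i < 0` such that all cyclic partial sums
`U (i + 1) + ⋯ + U (i + m)` are nonnegative. Summing row `i` by parts against the decreasing
weights `B i (i + 1) ≥ ⋯ ≥ B i (i + k - 1) ≥ 0` gives
`(B U) i ≥ B i (i + k - 1) * ∑ j, U j + (B i i - B i (i + k - 1)) * U i > λ * U i`,
because `B i i - B i (i + k - 1) < 1 ≤ λ` and `U i < 0`.
-/

open Finset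

theorem last_mul_sum_le_sum_mul_of_antitone {c u : ℕ → ℝ} {n : ℕ}
    (hc : ∀ m < n, c (m + 1) ≤ c m) (hG : ∀ m ≤ n, 0 ≤ ∑ l ∈ range m, u l) :
    c n * ∑ l ∈ range (n + 1), u l ≤ ∑ m ∈ range (n + 1), c m * u m := by
  induction n with
  | zero => simp
  | succ n ih =>
    have hcn := hc n n.lt_succ_self
    have hGn := hG (n + 1) le_rfl
    have ih := ih (fun m hm => hc m (by omega)) (fun m hm => hG m (by omega))
    rw [sum_range_succ u, sum_range_succ (fun m => c m * u m)]
    nlinarith [mul_le_mul_of_nonneg_right hcn hGn]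

theorem mul_lt_sum_mul_of_partialSum_nonneg {a u : ℕ → ℝ} {N : ℕ} {lam : ℝ} (hlam : 1 ≤ lam)
    (ha : ∀ m < N, a (m + 1) ≤ a m) (hpos : 0 ≤ a N) (hgap : a (N + 1) - 1 < a N)
    (hG : ∀ m ≤ N, 0 ≤ ∑ l ∈ range m, u l) (hS : 0 ≤ ∑ l ∈ range (N + 2), u l)
    (hu : u (N + 1) < 0) :
    lam * u (N + 1) < ∑ m ∈ range (N + 2), a m * u m := by
  have habel := last_mul_sum_le_sum_mul_of_antitone ha hG
  rw [sum_range_succ] at hS ⊢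
  have hcoef : a (N + 1) - a N - lam < 0 := by linarith
  nlinarith [mul_nonneg hpos hS, mul_pos_of_neg_of_neg hcoef hu]

section Cyclic

variable {k : ℕ} [NeZero k]

theorem sum_range_cyclic (f : Fin k → ℝ) (i : Fin k) :
    ∑ m ∈ range k, f (i + ((m + 1 : ℕ) : Fin k)) = ∑ j, f j := by
  rw [← Fin.sum_univ_eq_sum_range (fun m => f (i + ((m + 1 : ℕ) : Fin k)))]
  have h (j : Fin k) : i + (((j : ℕ) + 1 : ℕ) : Fin k) = i + 1 + j := by
    push_cast
    abel
  simp only [h]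
  exact Fintype.sum_equiv (Equiv.addLeft (i + 1)) _ _ fun _ => rfl

noncomputable def cycPartialSum (U : Fin k → ℝ) (i : Fin k) (m : ℕ) : ℝ :=
  ∑ l ∈ range m, U (i + ((l + 1 : ℕ) : Fin k))

theorem cycPartialSum_succ (U : Fin k → ℝ) (i : Fin k) (m : ℕ) :
    cycPartialSum U i (m + 1) = cycPartialSum U i m + U (i + ((m + 1 : ℕ) : Fin k)) :=
  sum_range_succ _ m

theorem cycPartialSum_add (U : Fin k → ℝ) (i : Fin k) (r m : ℕ) :
    cycPartialSum U i (r + m) = cycPartialSum U i r + cycPartialSum U (i + (r : Fin k)) m := by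
  unfold cycPartialSum
  rw [sum_range_add]
  congr 1
  refine sum_congr rfl fun l _ => ?_
  push_cast
  abel_nf

theorem cycPartialSum_self (U : Fin k → ℝ) (i : Fin k) : cycPartialSum U i k = ∑ j, U j :=
  sum_range_cyclic U i

/-- The index `i` is the first place where the partial sums after `n - 1` reach their minimum. -/
theorem exists_neg_forall_cycPartialSum_nonneg {U : Fin k → ℝ} (hS : 0 ≤ ∑ j, U j) {n : Fin k}
    (hn : U n < 0) : ∃ i, U i < 0 ∧ ∀ m ≤ k, 0 ≤ cycPartialSum U i m := by
  set P := cycPartialSum U (n - 1)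
  obtain ⟨t₀, ht₀, hmin⟩ := (range (k + 1)).exists_min_image P ⟨0, by simp⟩
  have hex : ∃ t, P t ≤ P t₀ := ⟨t₀, le_rfl⟩
  set t := Nat.find hex
  have htk : t ≤ k := (Nat.find_min' hex le_rfl).trans (Nat.lt_succ_iff.mp (mem_range.mp ht₀))
  have hPt : ∀ r ≤ k, P t ≤ P r := fun r hr =>
    (Nat.find_spec hex).trans (hmin r (mem_range.mpr (by omega)))
  obtain ⟨s, hs⟩ : ∃ s, t = s + 1 := by
    refine Nat.exists_eq_succ_of_ne_zero fun ht => ?_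
    have h1 : P 1 = U n := by simp [P, cycPartialSum]
    have h0 : P 0 = 0 := by simp [P, cycPartialSum]
    have := hPt 1 NeZero.one_le
    rw [ht, h0, h1] at this
    linarith
  refine ⟨n - 1 + (t : Fin k), ?_, fun m hm => ?_⟩
  · have hlt : ¬ P s ≤ P t₀ := Nat.find_min hex (by omega)
    have hstep := cycPartialSum_succ U (n - 1) s
    rw [← hs] at hstep
    linarith [Nat.find_spec hex]
  · have hsplit := cycPartialSum_add U (n - 1) t m
    by_cases htm : t + m ≤ k
    · linarith [hPt (t + m) htm]
    · have hwrap := cycPartialSum_add U (n - 1) (t + m - k) k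
      rw [Nat.sub_add_cancel (by omega), cycPartialSum_self] at hwrap
      linarith [hPt (t + m - k) (by omega)]

theorem lam_mul_lt_mulVec_apply (hk : 2 ≤ k) {B : Matrix (Fin k) (Fin k) ℝ} {i : Fin k}
    (hanti : ∀ m : ℕ, m + 1 ≤ k - 1 →
      B i (i + ((m + 1 : ℕ) : Fin k)) ≤ B i (i + ((m : ℕ) : Fin k)))
    (hlast : B i (i + ((k - 1 : ℕ) : Fin k)) > max (B i i - 1) 0)
    {U : Fin k → ℝ} {lam : ℝ} (hlam : 1 ≤ lam) (hi : U i < 0)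
    (hG : ∀ m ≤ k, 0 ≤ cycPartialSum U i m) (hS : 0 ≤ ∑ j, U j) :
    lam * U i < (B *ᵥ U) i := by
  obtain ⟨N, rfl⟩ : ∃ N, k = N + 2 := ⟨k - 2, by omega⟩
  have hwrap : i + ((N + 1 + 1 : ℕ) : Fin (N + 2)) = i := by
    rw [Fin.natCast_self, add_zero]
  rw [show N + 2 - 1 = N + 1 by omega, gt_iff_lt, max_lt_iff] at hlast
  rw [← cycPartialSum_self U i] at hS
  have key := mul_lt_sum_mul_of_partialSum_nonneg
    (a := fun m => B i (i + ((m + 1 : ℕ) : Fin (N + 2))))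
    (u := fun m => U (i + ((m + 1 : ℕ) : Fin (N + 2)))) hlam
    (fun m hm => hanti (m + 1) (by omega)) hlast.2.le (by simpa [hwrap] using hlast.1)
    (fun m hm => hG m (by omega)) hS (by simpa [hwrap] using hi)
  simp only [hwrap] at key
  rwa [mulVec, dotProduct, ← sum_range_cyclic (fun j => B i j * U j) i]

end Cyclic

theorem stmt_14_general (k : ℕ) [NeZero k] (B : Matrix (Fin k) (Fin k) ℝ)
    (hchain : ∀ i : Fin k, ∀ m : ℕ, m + 1 ≤ k - 1 →
      B i (i + ((m : ℕ) : Fin k)) > B i (i + ((m + 1 : ℕ) : Fin k)))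
    (hlast : ∀ i : Fin k, B i (i + ((k - 1 : ℕ) : Fin k)) > max (B i i - 1) 0) :
    ¬ ∃ (U : Fin k → ℝ) (lam : ℝ), 1 ≤ lam ∧ (∃ i, 0 < U i) ∧ (∃ i, U i < 0) ∧
      B.mulVec U = lam • U := by
  rintro ⟨U, lam, hlam, ⟨p, hp⟩, ⟨n, hn⟩, heig⟩
  wlog hS : 0 ≤ ∑ j, U j generalizing U p n
  · refine this (-U) n (by simpa) (by rw [mulVec_neg, heig, smul_neg]) p (by simpa) ?_
    simp only [Pi.neg_apply, sum_neg_distrib]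
    linarith
  have hk : 2 ≤ k := Fin.nontrivial_iff_two_le.mp ⟨p, n, fun h => by subst h; linarith⟩
  obtain ⟨i, hi, hG⟩ := exists_neg_forall_cycPartialSum_nonneg hS hn
  have := lam_mul_lt_mulVec_apply hk (fun m hm => (hchain i m hm).le) (hlast i) hlam hi hG hS
  rw [heig, Pi.smul_apply, smul_eq_mul] at this
  exact lt_irrefl _ this

/-- Let `B` be a `k×k` matrix with nonnegative real entries such that for every
row `i` one has `B i i > B i [i+1] > ⋯ > B i [i+k-1] > max (B i i - 1) 0` (indices mod `k`).
Then there is no vector `U ∈ ℝ^k` having both a strictly positive and a strictly negative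
coordinate which satisfies `B U = λ U` for some real `λ ≥ 1`. -/
theorem stmt_14 (k : ℕ) [NeZero k] (B : Matrix (Fin k) (Fin k) ℝ)
    (hnn : ∀ i j, 0 ≤ B i j)
    (hchain : ∀ i : Fin k, ∀ m : ℕ, m + 1 ≤ k - 1 →
      B i (i + ((m : ℕ) : Fin k)) > B i (i + ((m + 1 : ℕ) : Fin k)))
    (hlast : ∀ i : Fin k, B i (i + ((k - 1 : ℕ) : Fin k)) > max (B i i - 1) 0) :
    ¬ ∃ (U : Fin k → ℝ) (lam : ℝ), 1 ≤ lam ∧ (∃ i, 0 < U i) ∧ (∃ i, U i < 0) ∧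
      B.mulVec U = lam • U :=
  stmt_14_general k B hchain hlast
end

section
/- Let B be a k×k real matrix each of whose columns sums to zero, i.e. Σ_{i=0}^{k−1} B_{i,j} = 0 for every j. For i, j ∈ {0,…,k−1} let M_{ij} denote the (i,j)-minor of B (the determinant of the matrix obtained from B by deleting its i-th row and j-th column). Then M_{ij} = (−1)^{i+j} M_{jj} for all i, j ∈ {0,…,k−1}. -/
/-!
Replacing column `j` of `B` by the unit vector `eᵢ` and expanding along that column gives
`(-1)^(i+j) M i j`. Since `eᵢ - eⱼ` has coordinate sum zero, replacing column `j` by it keeps all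
column sums zero, so that determinant vanishes (the rows add up to zero). By linearity in
column `j`, the expansions for `eᵢ` and `eⱼ` agree.
-/

open Matrix

namespace Matrix

variable {n R : Type*} [Fintype n] [DecidableEq n] [CommRing R]

theorem det_updateCol_single {m : ℕ}
    (A : Matrix (Fin (m + 1)) (Fin (m + 1)) R) (i j : Fin (m + 1)) :
    (A.updateCol j (Pi.single i 1)).det
      = (-1 : R) ^ ((i : ℕ) + (j : ℕ)) * (A.submatrix i.succAbove j.succAbove).det := by
  rw [det_succ_column _ j, Fintype.sum_eq_single i fun k hk => ?_]
  · simp [submatrix_updateCol_succAbove]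
  · simp [Pi.single_eq_of_ne hk]

theorem det_eq_zero_of_sum_col_eq_zero [Nonempty n] {A : Matrix n n R}
    (hcol : ∀ j, ∑ i, A i j = 0) : A.det = 0 := by
  obtain ⟨i⟩ := ‹Nonempty n›
  have hrows : ∑ k, (1 : n → R) k • A k = 0 := by
    ext j
    simp only [Pi.one_apply, one_smul, Pi.zero_apply]
    exact (Finset.sum_apply j _ _).trans (hcol j)
  have h := det_updateRow_sum A i 1
  rw [hrows, Pi.one_apply, one_smul] at h
  rw [← h]
  exact det_eq_zero_of_row_eq_zero i fun _ => by simp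

theorem det_updateCol_single_eq_of_sum_col_eq_zero [Nonempty n] {A : Matrix n n R}
    (hcol : ∀ j, ∑ i, A i j = 0) (j i i' : n) :
    (A.updateCol j (Pi.single i 1)).det = (A.updateCol j (Pi.single i' 1)).det := by
  have hdiff : (A.updateCol j (Pi.single i 1 - Pi.single i' 1)).det = 0 := by
    refine det_eq_zero_of_sum_col_eq_zero fun c => ?_
    by_cases hc : c = j
    · simp [hc, Finset.sum_sub_distrib]
    · simpa [updateCol_apply, hc] using hcol c
  have h := det_updateCol_add A j (Pi.single i 1 - Pi.single i' 1) (Pi.single i' 1)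
  rwa [sub_add_cancel, hdiff, zero_add] at h

end Matrix

/-- Let `B` be a `k×k` real matrix each of whose columns sums to zero.
If `M i j` denotes the `(i,j)`-minor of `B` (the determinant of `B` with row `i` and column `j`
deleted), then `M i j = (−1)^(i+j) * M j j` for all `i, j`. -/
theorem stmt_17 (m : ℕ) (B : Matrix (Fin (m + 1)) (Fin (m + 1)) ℝ)
    (hcol : ∀ j, ∑ i, B i j = 0) (i j : Fin (m + 1)) :
    (B.submatrix i.succAbove j.succAbove).det
      = (-1 : ℝ) ^ ((i : ℕ) + (j : ℕ)) * (B.submatrix j.succAbove j.succAbove).det := by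
  have key := det_updateCol_single_eq_of_sum_col_eq_zero hcol j i j
  rw [det_updateCol_single, det_updateCol_single, Even.neg_one_pow ⟨_, rfl⟩, one_mul] at key
  calc (B.submatrix i.succAbove j.succAbove).det
      = (-1 : ℝ) ^ ((i : ℕ) + (j : ℕ)) * ((-1 : ℝ) ^ ((i : ℕ) + (j : ℕ))
          * (B.submatrix i.succAbove j.succAbove).det) := by
        rw [← mul_assoc, ← pow_add, Even.neg_one_pow ⟨_, rfl⟩, one_mul]
    _ = _ := by rw [key]
end

section
/- Let k = 2 and z ∈ I_μ. Define Γ₂(z) := (1 − ∫ β₀ q₀(dx)/(1 − zx)) / (1 − ∫ β₀ q₀(dx)/(1 + zx)) + (1 − ∫ β₁ q₁(dx)/(1 − zx)) / (1 − ∫ β₁ q₁(dx)/(1 + zx)) (both denominators are positive since β₀, β₁ < 1). Then Γ₂(z) and det(I₂ − A(z)) have the same sign, in the sense that they are both negative, both null, or both positive; in particular (via the sign equivalence between det(I₂ − A(z)) and 1 − ρ(A(z))), Γ₂(z) and 1 − ρ(A(z)) have the same sign. -/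
open MeasureTheory Matrix Filter

noncomputable section

/-!
Since `z ∈ I_μ`, the geometric series `∑ (z x)ⁿ` is `β_j q_j`-integrable, so `z x < 1` almost
surely and `a_j = ∫ β_j/(1 - z x)`, `b_j = ∫ β_j/(1 + z x)` are finite, with `b_j ≤ β_j < 1`.
Splitting `1/(1 - t²)` and `t/(1 - t²)` into partial fractions writes `A(z)` through `a` and `b`,
and then `2 det(I₂ - A(z)) = (1 - a₀)(1 - b₁) + (1 - b₀)(1 - a₁) = Γ₂(z) (1 - b₀)(1 - b₁)`.
For an eigenvalue `r` of `A(z)`, `det(I₂ - A(z)) = (1 - r)(1 + r - tr A(z))`, and a positive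
eigenvector forces the second factor to be positive.
-/

section GeometricSeries

variable {μ : Measure ℝ} {β z : ℝ}

lemma tsum_mul_lintegral_pow_eq_lintegral_inv (hz : 0 ≤ z) (hβ : 0 ≤ β)
    (hμ : ∀ᵐ x ∂μ, 0 ≤ x) :
    ∑' n : ℕ, ENNReal.ofReal (z ^ n) * ∫⁻ x, ENNReal.ofReal (x ^ n * β) ∂μ
      = ∫⁻ x, ENNReal.ofReal β * (1 - ENNReal.ofReal (z * x))⁻¹ ∂μ := by
  have hmeas (n : ℕ) : Measurable fun x : ℝ => ENNReal.ofReal (x ^ n * β) := by fun_prop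
  simp_rw [← lintegral_const_mul _ (hmeas _)]
  rw [← lintegral_tsum fun n => ((hmeas n).const_mul _).aemeasurable]
  refine lintegral_congr_ae ?_
  filter_upwards [hμ] with x hx
  have hterm (n : ℕ) : ENNReal.ofReal (z ^ n) * ENNReal.ofReal (x ^ n * β)
      = ENNReal.ofReal β * ENNReal.ofReal (z * x) ^ n := by
    rw [← ENNReal.ofReal_mul (by positivity), ← ENNReal.ofReal_pow (by positivity),
      ← ENNReal.ofReal_mul hβ, mul_pow]
    ring_nf
  simp_rw [hterm, ENNReal.tsum_mul_left, ENNReal.tsum_geometric]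

lemma ae_mul_lt_one_of_lintegral_lt_top (hβ : 0 < β)
    (h : ∫⁻ x, ENNReal.ofReal β * (1 - ENNReal.ofReal (z * x))⁻¹ ∂μ < ⊤) :
    ∀ᵐ x ∂μ, z * x < 1 := by
  filter_upwards [ae_lt_top (by fun_prop) h.ne] with x hx
  rw [← ENNReal.ofReal_lt_one, ← tsub_pos_iff_lt, ← ENNReal.inv_lt_top]
  exact ENNReal.lt_top_of_mul_ne_top_right hx.ne (ENNReal.ofReal_pos.mpr hβ).ne'

lemma integrable_div_one_sub_mul_of_lintegral_lt_top (hz : 0 ≤ z) (hβ : 0 < β)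
    (hμ : ∀ᵐ x ∂μ, 0 ≤ x)
    (h : ∫⁻ x, ENNReal.ofReal β * (1 - ENNReal.ofReal (z * x))⁻¹ ∂μ < ⊤) :
    Integrable (fun x => β / (1 - z * x)) μ := by
  have hlt := ae_mul_lt_one_of_lintegral_lt_top hβ h
  refine ⟨(by fun_prop : Measurable fun x => β / (1 - z * x)).aestronglyMeasurable, ?_⟩
  have hnonneg : 0 ≤ᵐ[μ] fun x => β / (1 - z * x) := by
    filter_upwards [hlt] with x hx
    exact div_nonneg hβ.le (by linarith)
  rw [hasFiniteIntegral_iff_ofReal hnonneg]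
  refine lt_of_eq_of_lt (lintegral_congr_ae ?_) h
  filter_upwards [hμ, hlt] with x hx hzx
  rw [ENNReal.ofReal_div_of_pos (by linarith), ENNReal.ofReal_sub _ (by positivity),
    ENNReal.ofReal_one, div_eq_mul_inv]

end GeometricSeries

lemma inv_one_sub_sq_mul {t : ℝ} (β : ℝ) (h₁ : 1 - t ≠ 0) (h₂ : 1 + t ≠ 0) :
    (1 - t ^ 2)⁻¹ * β = (β / (1 - t) + β / (1 + t)) / 2 := by
  rw [show 1 - t ^ 2 = (1 - t) * (1 + t) by ring]
  field_simp
  ring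

lemma div_one_sub_sq_mul {t : ℝ} (β : ℝ) (h₁ : 1 - t ≠ 0) (h₂ : 1 + t ≠ 0) :
    t / (1 - t ^ 2) * β = (β / (1 - t) - β / (1 + t)) / 2 := by
  rw [show 1 - t ^ 2 = (1 - t) * (1 + t) by ring]
  field_simp
  ring

section Integrals

variable {μ : Measure ℝ} {β z : ℝ}

lemma integrable_div_one_add_mul [IsFiniteMeasure μ] (hz : 0 ≤ z) (hμ : ∀ᵐ x ∂μ, 0 ≤ x) :
    Integrable (fun x => β / (1 + z * x)) μ := by
  refine Integrable.mono' (integrable_const |β|)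
    (by fun_prop : Measurable fun x => β / (1 + z * x)).aestronglyMeasurable ?_
  filter_upwards [hμ] with x hx
  have : 1 ≤ 1 + z * x := by linarith [mul_nonneg hz hx]
  rw [norm_div, Real.norm_eq_abs, Real.norm_eq_abs, abs_of_pos (a := 1 + z * x) (by linarith)]
  exact div_le_self (abs_nonneg β) this

lemma integral_div_one_add_mul_le_integral_div_one_sub_mul (hβ : 0 ≤ β) (hz : 0 ≤ z)
    (hμ : ∀ᵐ x ∂μ, 0 ≤ x) (hlt : ∀ᵐ x ∂μ, z * x < 1)
    (hint : Integrable (fun x => β / (1 - z * x)) μ)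
    (hint' : Integrable (fun x => β / (1 + z * x)) μ) :
    ∫ x, β / (1 + z * x) ∂μ ≤ ∫ x, β / (1 - z * x) ∂μ := by
  refine integral_mono_ae hint' hint ?_
  filter_upwards [hμ, hlt] with x hx hzx
  have := mul_nonneg hz hx
  exact div_le_div_of_nonneg_left hβ (by linarith) (by linarith)

lemma integral_div_one_add_mul_le [IsProbabilityMeasure μ] (hβ : 0 ≤ β) (hz : 0 ≤ z)
    (hμ : ∀ᵐ x ∂μ, 0 ≤ x) :
    ∫ x, β / (1 + z * x) ∂μ ≤ β := by
  refine (integral_mono_ae (integrable_div_one_add_mul hz hμ) (integrable_const β) ?_).trans_eq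
    (by simp)
  filter_upwards [hμ] with x hx
  exact div_le_self hβ (by linarith [mul_nonneg hz hx])

lemma integral_inv_one_sub_sq_mul (hint : Integrable (fun x => β / (1 - z * x)) μ)
    (hint' : Integrable (fun x => β / (1 + z * x)) μ)
    (hpole : ∀ᵐ x ∂μ, 1 - z * x ≠ 0 ∧ 1 + z * x ≠ 0) :
    ∫ x, (1 - (z * x) ^ 2)⁻¹ * β ∂μ
      = ((∫ x, β / (1 - z * x) ∂μ) + ∫ x, β / (1 + z * x) ∂μ) / 2 := by
  rw [← integral_add hint hint', ← integral_div]
  exact integral_congr_ae (hpole.mono fun x hx => inv_one_sub_sq_mul β hx.1 hx.2)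

lemma integral_div_one_sub_sq_mul (hint : Integrable (fun x => β / (1 - z * x)) μ)
    (hint' : Integrable (fun x => β / (1 + z * x)) μ)
    (hpole : ∀ᵐ x ∂μ, 1 - z * x ≠ 0 ∧ 1 + z * x ≠ 0) :
    ∫ x, z * x / (1 - (z * x) ^ 2) * β ∂μ
      = ((∫ x, β / (1 - z * x) ∂μ) - ∫ x, β / (1 + z * x) ∂μ) / 2 := by
  rw [← integral_sub hint hint', ← integral_div]
  exact integral_congr_ae (hpole.mono fun x hx => div_one_sub_sq_mul β hx.1 hx.2)

end Integrals

lemma sign_eq_sign_iff {x y : ℝ} :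
    SignType.sign x = SignType.sign y ↔ (x < 0 ↔ y < 0) ∧ (x = 0 ↔ y = 0) ∧ (0 < x ↔ 0 < y) := by
  rw [← sign_eq_neg_one_iff (a := x), ← sign_eq_neg_one_iff (a := y), ← sign_eq_zero_iff (a := x),
    ← sign_eq_zero_iff (a := y), ← sign_eq_one_iff (a := x), ← sign_eq_one_iff (a := y)]
  generalize SignType.sign x = s, SignType.sign y = t
  revert s t
  decide

lemma sign_eq_sign_of_mul_eq_mul {x y c d : ℝ} (hc : 0 < c) (hd : 0 < d) (h : x * c = d * y) :
    SignType.sign x = SignType.sign y := by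
  simpa [sign_mul, sign_pos hc, sign_pos hd] using congrArg SignType.sign h

lemma Matrix.det_one_sub_eq_of_mulVec_eq_smul {K : Type*} [Field K]
    {M : Matrix (Fin 2) (Fin 2) K} {v : Fin 2 → K} {r : K} (hv : v ≠ 0) (h : M *ᵥ v = r • v) :
    (1 - M).det = (1 - r) * (1 + r - M.trace) := by
  have hdet : (M - r • 1).det = 0 :=
    Matrix.exists_mulVec_eq_zero_iff.mp ⟨v, hv, by
      rw [Matrix.sub_mulVec, h, Matrix.smul_mulVec, Matrix.one_mulVec, sub_self]⟩
  rw [Matrix.det_fin_two] at hdet ⊢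
  simp only [Matrix.sub_apply, Matrix.smul_apply, Matrix.one_apply_eq, Matrix.trace_fin_two,
    Matrix.one_apply_ne (by decide : (0 : Fin 2) ≠ 1),
    Matrix.one_apply_ne (by decide : (1 : Fin 2) ≠ 0), smul_eq_mul] at hdet ⊢
  linear_combination hdet

lemma Matrix.diag_le_of_mulVec_eq_smul {n : Type*} [Fintype n]
    {M : Matrix n n ℝ} {v : n → ℝ} {r : ℝ} (hM : ∀ i j, i ≠ j → 0 ≤ M i j) (hv : ∀ i, 0 < v i)
    (h : M *ᵥ v = r • v) (i : n) : M i i ≤ r := by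
  classical
  have hi : M i i * v i ≤ r * v i :=
    calc M i i * v i
        ≤ M i i * v i + ∑ j ∈ Finset.univ.erase i, M i j * v j :=
          le_add_of_nonneg_right (Finset.sum_nonneg fun j hj =>
            mul_nonneg (hM i j (Finset.ne_of_mem_erase hj).symm) (hv j).le)
      _ = ∑ j, M i j * v j := Finset.add_sum_erase _ (fun j => M i j * v j) (Finset.mem_univ i)
      _ = r * v i := by simpa [Matrix.mulVec, dotProduct] using congrFun h i
  exact le_of_mul_le_mul_right hi (hv i)

/-- `A(z)` for `k = 2`, in terms of `a j = ρ_j(z)` and `b j = ρ_j(-z)`. -/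
def evenOddMatrix (a b : Fin 2 → ℝ) : Matrix (Fin 2) (Fin 2) ℝ :=
  !![(a 0 + b 0) / 2, (a 1 - b 1) / 2; (a 0 - b 0) / 2, (a 1 + b 1) / 2]

lemma det_one_sub_evenOddMatrix (a b : Fin 2 → ℝ) :
    (1 - evenOddMatrix a b).det = ((1 - a 0) * (1 - b 1) + (1 - b 0) * (1 - a 1)) / 2 := by
  rw [Matrix.det_fin_two]
  simp only [evenOddMatrix, Matrix.sub_apply, one_apply_eq, one_apply_ne, of_apply, cons_val',
    cons_val_zero, cons_val_one, cons_val_fin_one, ne_eq, zero_ne_one, one_ne_zero,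
    not_false_eq_true]
  ring

lemma trace_evenOddMatrix (a b : Fin 2 → ℝ) :
    (evenOddMatrix a b).trace = (a 0 + b 0) / 2 + (a 1 + b 1) / 2 := by
  simp [evenOddMatrix, Matrix.trace_fin_two]

section EvenOddMatrix

variable {a b : Fin 2 → ℝ}

lemma sign_div_add_div_eq_sign_det_one_sub_evenOddMatrix (hb : ∀ j, b j < 1) :
    SignType.sign ((1 - a 0) / (1 - b 0) + (1 - a 1) / (1 - b 1))
      = SignType.sign (1 - evenOddMatrix a b).det := by
  have h0 : 0 < 1 - b 0 := sub_pos.mpr (hb 0)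
  have h1 : 0 < 1 - b 1 := sub_pos.mpr (hb 1)
  refine sign_eq_sign_of_mul_eq_mul (mul_pos h0 h1) two_pos ?_
  rw [det_one_sub_evenOddMatrix]
  field_simp

lemma sign_det_one_sub_evenOddMatrix_eq_sign_one_sub (hb : ∀ j, b j < 1) (hba : ∀ j, b j ≤ a j)
    {v : Fin 2 → ℝ} {r : ℝ} (hv : ∀ i, 0 < v i) (h : evenOddMatrix a b *ᵥ v = r • v) :
    SignType.sign (1 - evenOddMatrix a b).det = SignType.sign (1 - r) := by
  have hdet := Matrix.det_one_sub_eq_of_mulVec_eq_smul (fun h0 => (hv 0).ne' (congrFun h0 0)) h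
  have hoff : ∀ i j, i ≠ j → 0 ≤ evenOddMatrix a b i j := by
    intro i j hij
    fin_cases i <;> fin_cases j <;> simp [evenOddMatrix] at hij ⊢ <;> linarith [hba 0, hba 1]
  have hr0 := Matrix.diag_le_of_mulVec_eq_smul hoff hv h 0
  have hr1 := Matrix.diag_le_of_mulVec_eq_smul hoff hv h 1
  have hdet' : ((1 - a 0) * (1 - b 1) + (1 - b 0) * (1 - a 1)) / 2
      = (1 - r) * (1 + r - ((a 0 + b 0) / 2 + (a 1 + b 1) / 2)) := by
    rw [← det_one_sub_evenOddMatrix, hdet, trace_evenOddMatrix]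
  simp only [evenOddMatrix, Matrix.of_apply, Matrix.cons_val', Matrix.cons_val_zero,
    Matrix.cons_val_one, Matrix.empty_val', Matrix.cons_val_fin_one] at hr0 hr1
  -- If `1 + r ≤ tr A`, then `r ≥ 1` and `a 0, a 1 > 1`, so `det (1 - A)` is negative and
  -- `(1 - r) (1 + r - tr A)` is not.
  have hE : 0 < 1 + r - (evenOddMatrix a b).trace := by
    rw [trace_evenOddMatrix]
    by_contra! hE
    have hr : 1 ≤ r := by linarith [hb 0, hb 1]
    have ha0 : 1 < a 0 := by linarith [hb 0, hb 1]
    have ha1 : 1 < a 1 := by linarith [hb 0, hb 1]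
    nlinarith [mul_pos (sub_pos.mpr ha0) (sub_pos.mpr (hb 1)),
      mul_pos (sub_pos.mpr (hb 0)) (sub_pos.mpr ha1),
      mul_nonneg (sub_nonneg.mpr hr) (neg_nonneg.mpr hE)]
  exact sign_eq_sign_of_mul_eq_mul one_pos hE (by rw [hdet]; ring)

end EvenOddMatrix

lemma Amat_two_eq_evenOddMatrix {β : Fin 2 → ℝ} {q : Fin 2 → Measure ℝ} {z : ℝ}
    (hint : ∀ j, Integrable (fun x => β j / (1 - z * x)) (q j))
    (hint' : ∀ j, Integrable (fun x => β j / (1 + z * x)) (q j))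
    (hpole : ∀ j, ∀ᵐ x ∂(q j), 1 - z * x ≠ 0 ∧ 1 + z * x ≠ 0) :
    Amat 2 β q z = evenOddMatrix (fun j => ∫ x, β j / (1 - z * x) ∂(q j))
      (fun j => ∫ x, β j / (1 + z * x) ∂(q j)) := by
  ext i j
  fin_cases i <;> fin_cases j <;>
    simp only [Amat, evenOddMatrix, of_apply, cons_val', cons_val_zero, cons_val_one,
      cons_val_fin_one, Fin.isValue, Fin.zero_eta, Fin.mk_one, sub_self, sub_zero, zero_sub,
      Fin.coe_neg_one, Fin.coe_ofNat_eq_mod, Nat.zero_mod, Nat.mod_succ, pow_zero, pow_one, one_div]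
  · exact integral_inv_one_sub_sq_mul (hint 0) (hint' 0) (hpole 0)
  · exact integral_div_one_sub_sq_mul (hint 1) (hint' 1) (hpole 1)
  · exact integral_div_one_sub_sq_mul (hint 0) (hint' 0) (hpole 0)
  · exact integral_inv_one_sub_sq_mul (hint 1) (hint' 1) (hpole 1)

theorem stmt_18_general (β : Fin 2 → ℝ) (q : Fin 2 → Measure ℝ)
    [∀ i, IsProbabilityMeasure (q i)]
    (hβ : ∀ i, β i ∈ Set.Ioo (0:ℝ) 1)
    (hq : ∀ i, q i (Set.Icc (0:ℝ) 1)ᶜ = 0)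
    (z : ℝ) (hz : memIm 2 β q z)
    (Γ : ℝ)
    (hΓ : Γ = (1 - ∫ x, β 0 / (1 - z * x) ∂(q 0)) / (1 - ∫ x, β 0 / (1 + z * x) ∂(q 0))
            + (1 - ∫ x, β 1 / (1 - z * x) ∂(q 1)) / (1 - ∫ x, β 1 / (1 + z * x) ∂(q 1))) :
    ((Γ < 0 ↔ (1 - Amat 2 β q z).det < 0) ∧
     (Γ = 0 ↔ (1 - Amat 2 β q z).det = 0) ∧
     (0 < Γ ↔ 0 < (1 - Amat 2 β q z).det)) ∧
    (∀ r : ℝ, 0 < r →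
      (∃ v : Fin 2 → ℝ, (∀ i, 0 < v i) ∧ (Amat 2 β q z).mulVec v = r • v) →
      ((Γ < 0 ↔ 1 - r < 0) ∧ (Γ = 0 ↔ 1 - r = 0) ∧ (0 < Γ ↔ 0 < 1 - r))) := by
  obtain ⟨hz, hfin⟩ := hz
  have hnonneg j : ∀ᵐ x ∂(q j), 0 ≤ x := by
    filter_upwards [mem_ae_iff.mpr (hq j)] with x hx using hx.1
  have hlint j := (tsum_mul_lintegral_pow_eq_lintegral_inv hz (hβ j).1.le (hnonneg j)) ▸ hfin j
  have hlt j := ae_mul_lt_one_of_lintegral_lt_top (hβ j).1 (hlint j)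
  have hint j := integrable_div_one_sub_mul_of_lintegral_lt_top hz (hβ j).1 (hnonneg j) (hlint j)
  have hint' j := integrable_div_one_add_mul (β := β j) hz (hnonneg j)
  have hpole j : ∀ᵐ x ∂(q j), 1 - z * x ≠ 0 ∧ 1 + z * x ≠ 0 := by
    filter_upwards [hnonneg j, hlt j] with x hx hzx
    exact ⟨by linarith, by linarith [mul_nonneg hz hx]⟩
  have hb j : ∫ x, β j / (1 + z * x) ∂(q j) < 1 :=
    (integral_div_one_add_mul_le (hβ j).1.le hz (hnonneg j)).trans_lt (hβ j).2
  have hba j := integral_div_one_add_mul_le_integral_div_one_sub_mul (hβ j).1.le hz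
    (hnonneg j) (hlt j) (hint j) (hint' j)
  have hA := Amat_two_eq_evenOddMatrix hint hint' hpole
  have hΓdet : SignType.sign Γ = SignType.sign (1 - Amat 2 β q z).det := by
    rw [hΓ, hA]
    exact sign_div_add_div_eq_sign_det_one_sub_evenOddMatrix
      (a := fun j => ∫ x, β j / (1 - z * x) ∂(q j)) hb
  refine ⟨sign_eq_sign_iff.mp hΓdet, fun r _ ⟨v, hv, hvr⟩ => sign_eq_sign_iff.mp (hΓdet.trans ?_)⟩
  rw [hA] at hvr ⊢
  exact sign_det_one_sub_evenOddMatrix_eq_sign_one_sub hb hba hv hvr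

/-- `k = 2` case. With
`Γ₂(z) = (1 − ∫ β₀ q₀(dx)/(1−zx)) / (1 − ∫ β₀ q₀(dx)/(1+zx))
       + (1 − ∫ β₁ q₁(dx)/(1−zx)) / (1 − ∫ β₁ q₁(dx)/(1+zx))`,
the quantities `Γ₂(z)` and `det (I₂ − A(z))` have the same sign; in particular `Γ₂(z)` and
`1 − ρ(A(z))` have the same sign (the Perron eigenvalue being a positive real eigenvalue with a
positive eigenvector). -/
theorem stmt_18 (β : Fin 2 → ℝ) (q : Fin 2 → Measure ℝ)
    [∀ i, IsProbabilityMeasure (q i)]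
    (hβ : ∀ i, β i ∈ Set.Ioo (0:ℝ) 1)
    (hq : ∀ i, q i (Set.Icc (0:ℝ) 1)ᶜ = 0)
    (hηq : ∀ i, 0 < etaSup (q i))
    (z : ℝ) (hz : memIm 2 β q z)
    (Γ : ℝ)
    (hΓ : Γ = (1 - ∫ x, β 0 / (1 - z * x) ∂(q 0)) / (1 - ∫ x, β 0 / (1 + z * x) ∂(q 0))
            + (1 - ∫ x, β 1 / (1 - z * x) ∂(q 1)) / (1 - ∫ x, β 1 / (1 + z * x) ∂(q 1))) :
    ((Γ < 0 ↔ (1 - Amat 2 β q z).det < 0) ∧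
     (Γ = 0 ↔ (1 - Amat 2 β q z).det = 0) ∧
     (0 < Γ ↔ 0 < (1 - Amat 2 β q z).det)) ∧
    (∀ r : ℝ, 0 < r →
      (∃ v : Fin 2 → ℝ, (∀ i, 0 < v i) ∧ (Amat 2 β q z).mulVec v = r • v) →
      ((Γ < 0 ↔ 1 - r < 0) ∧ (Γ = 0 ↔ 1 - r = 0) ∧ (0 < Γ ↔ 0 < 1 - r))) :=
  stmt_18_general β q hβ hq z hz Γ hΓ
end
end
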